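/- Restrict to one-dimensional shifts: define Δℓ_k(t) = Δℓ(t·e_k). If 0 < N_k < N, where N_k = #{n : y_n = k}, then Δℓ_k(t) → −∞ as t → +∞ and as t → −∞. Consequently, for any α ∈ (0,1], the set F_k(α) = {t ∈ ℝ : Δℓ_k(t) ≥ log α} is a nonempty compact interval containing 0. -/

import Mathlib

/-!
Example `n` contributes `[y n = k] t - (L n t - L n 0)` to `Δℓ_k(t)`, where
`L n t = log (∑_{l ≠ k} exp (z n l) + exp (z n k) * exp t)` is convex in `t`; hence `Δℓ_k` is
concave. Since `L n t ≥ z n k + t` and `L n t ≥ z n j` for any class `j ≠ k`, `Δℓ_k` lies below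
affine functions of slopes `N_k - N < 0` and `N_k > 0`, so it tends to `-∞` at both ends. A concave
function with this behaviour has compact convex superlevel sets, i.e. closed intervals.
-/

noncomputable def softmax {K : ℕ} (v : Fin K → ℝ) (j : Fin K) : ℝ :=
  Real.exp (v j) / ∑ l, Real.exp (v l)

noncomputable def deltaEll {N K : ℕ} (z : Fin N → Fin K → ℝ) (y : Fin N → Fin K)
    (c : Fin K → ℝ) : ℝ :=
  ∑ n, (Real.log (softmax (fun l => z n l + c l) (y n)) -
        Real.log (softmax (z n) (y n)))

noncomputable def deltaEllK {N K : ℕ} (z : Fin N → Fin K → ℝ) (y : Fin N → Fin K)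
    (k : Fin K) (t : ℝ) : ℝ :=
  deltaEll z y (fun l => if l = k then t else 0)

open Real Filter Set

lemma convexOn_log_add_mul_exp {C D : ℝ} (hC : 0 ≤ C) (hD : 0 < D) :
    ConvexOn ℝ univ fun t => log (C + D * exp t) := by
  have hpos : ∀ t, 0 < C + D * exp t := fun t => by positivity
  have hderiv : ∀ t, HasDerivAt (fun t => log (C + D * exp t)) (1 - C / (C + D * exp t)) t := by
    intro t
    convert (((hasDerivAt_exp t).const_mul D).const_add C).log (hpos t).ne' using 1
    field_simp
    ring
  refine Monotone.convexOn_univ_of_deriv (fun t => (hderiv t).differentiableAt) ?_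
  rw [funext fun t => (hderiv t).deriv]
  intro a b hab
  have := hpos a
  dsimp only
  gcongr

lemma convexOn_finset_sum {E ι : Type*} [AddCommGroup E] [Module ℝ E] {S : Set E}
    (hS : Convex ℝ S) (s : Finset ι) {f : ι → E → ℝ} (hf : ∀ i ∈ s, ConvexOn ℝ S (f i)) :
    ConvexOn ℝ S fun x => ∑ i ∈ s, f i x := by
  classical
  induction s using Finset.induction_on with
  | empty => simpa using convexOn_const 0 hS
  | insert i s hi ih =>
    simp only [Finset.sum_insert hi]
    exact (hf i (Finset.mem_insert_self i s)).add
      (ih fun j hj => hf j (Finset.mem_insert_of_mem hj))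

lemma sum_exp_add_ite {ι : Type*} [Fintype ι] [DecidableEq ι] (v : ι → ℝ) (k : ι) (t : ℝ) :
    ∑ l, exp (v l + if l = k then t else 0) =
      ∑ l ∈ Finset.univ.erase k, exp (v l) + exp (v k) * exp t := by
  rw [← Finset.sum_erase_add _ _ (Finset.mem_univ k), if_pos rfl, exp_add]
  congr 1
  refine Finset.sum_congr rfl fun l hl => ?_
  rw [if_neg (Finset.ne_of_mem_erase hl), add_zero]

lemma convexOn_log_sum_exp_add_ite {ι : Type*} [Fintype ι] [DecidableEq ι] (v : ι → ℝ) (k : ι) :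
    ConvexOn ℝ univ fun t => log (∑ l, exp (v l + if l = k then t else 0)) := by
  simp only [sum_exp_add_ite]
  exact convexOn_log_add_mul_exp (Finset.sum_nonneg fun _ _ => (exp_pos _).le) (exp_pos _)

lemma le_log_sum_exp {ι : Type*} [Fintype ι] (v : ι → ℝ) (j : ι) :
    v j ≤ log (∑ l, exp (v l)) := by
  rw [le_log_iff_exp_le (Finset.sum_pos (fun _ _ => exp_pos _) ⟨j, Finset.mem_univ j⟩)]
  exact Finset.single_le_sum (fun l _ => (exp_pos (v l)).le) (Finset.mem_univ j)

lemma log_softmax {K : ℕ} (v : Fin K → ℝ) (j : Fin K) :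
    log (softmax v j) = v j - log (∑ l, exp (v l)) := by
  have hpos : 0 < ∑ l, exp (v l) := Finset.sum_pos (fun _ _ => exp_pos _) ⟨j, Finset.mem_univ j⟩
  rw [softmax, log_div (exp_ne_zero _) hpos.ne', log_exp]

lemma tendsto_atTop_atBot_of_le_mul_add {f : ℝ → ℝ} {a b : ℝ} (ha : a < 0)
    (hf : ∀ t, f t ≤ a * t + b) : Tendsto f atTop atBot :=
  tendsto_atBot_mono hf <| tendsto_atBot_add_const_right _ b <|
    tendsto_id.const_mul_atTop_of_neg ha

lemma tendsto_atBot_atBot_of_le_mul_add {f : ℝ → ℝ} {a b : ℝ} (ha : 0 < a)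
    (hf : ∀ t, f t ≤ a * t + b) : Tendsto f atBot atBot :=
  tendsto_atBot_mono hf <| tendsto_atBot_add_const_right _ b <| tendsto_id.const_mul_atBot ha

lemma ConcaveOn.exists_setOf_le_eq_Icc {f : ℝ → ℝ} (hf : ConcaveOn ℝ univ f)
    (htop : Tendsto f atTop atBot) (hbot : Tendsto f atBot atBot) {c x : ℝ} (hx : c ≤ f x) :
    ∃ a b, a ≤ x ∧ x ≤ b ∧ {t | c ≤ f t} = Icc a b := by
  have hcont : Continuous f := continuousOn_univ.mp (hf.continuousOn isOpen_univ)
  have hcocompact : Tendsto f (cocompact ℝ) atBot := by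
    rw [cocompact_eq_atBot_atTop]
    exact hbot.sup htop
  obtain ⟨K, hK, hKc⟩ := mem_cocompact.mp (hcocompact.eventually (eventually_lt_atBot c))
  have hcompact : IsCompact {t | c ≤ f t} :=
    hK.of_isClosed_subset (isClosed_le continuous_const hcont) fun t ht => by
      by_contra htK
      exact (hKc htK).not_ge (show c ≤ f t from ht)
  have hconn : IsConnected {t | c ≤ f t} :=
    ⟨⟨x, hx⟩, by simpa using (hf.convex_ge c).isPreconnected⟩
  exact ⟨_, _, csInf_le hcompact.bddBelow hx, le_csSup hcompact.bddAbove hx,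
    eq_Icc_of_connected_compact hconn hcompact⟩

section deltaEllK

variable {N K : ℕ} (z : Fin N → Fin K → ℝ) (y : Fin N → Fin K) (k : Fin K)

lemma deltaEllK_eq (t : ℝ) :
    deltaEllK z y k t = (Finset.univ.filter fun n => y n = k).card * t -
      ∑ n, (log (∑ l, exp (z n l + if l = k then t else 0)) - log (∑ l, exp (z n l))) := by
  simp only [deltaEllK, deltaEll, log_softmax, Finset.card_filter, Nat.cast_sum, Finset.sum_mul,
    ← Finset.sum_sub_distrib]
  refine Finset.sum_congr rfl fun n _ => ?_
  split_ifs <;> ring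

lemma deltaEllK_zero : deltaEllK z y k 0 = 0 := by
  simp [deltaEllK, deltaEll]

lemma concaveOn_deltaEllK : ConcaveOn ℝ univ (deltaEllK z y k) := by
  rw [funext (deltaEllK_eq z y k)]
  refine ((concaveOn_id convex_univ).smul (Nat.cast_nonneg _)).sub
    (convexOn_finset_sum convex_univ _ fun n _ => ?_)
  exact (convexOn_log_sum_exp_add_ite (z n) k).add_const _

lemma exists_deltaEllK_le_card_sub_mul_add :
    ∃ b, ∀ t,
      deltaEllK z y k t ≤ (((Finset.univ.filter fun n => y n = k).card : ℝ) - N) * t + b := by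
  refine ⟨∑ n, (log (∑ l, exp (z n l)) - z n k), fun t => ?_⟩
  have h n : z n k + t ≤ log (∑ l, exp (z n l + if l = k then t else 0)) := by
    simpa using le_log_sum_exp (fun l => z n l + if l = k then t else 0) k
  have := Finset.sum_le_sum fun n (_ : n ∈ Finset.univ) => h n
  simp only [Finset.sum_add_distrib, Finset.sum_const, Finset.card_univ, Fintype.card_fin,
    nsmul_eq_mul, Finset.sum_sub_distrib] at this ⊢
  rw [deltaEllK_eq, Finset.sum_sub_distrib]
  linarith

lemma exists_deltaEllK_le_card_mul_add (hK : 2 ≤ K) :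
    ∃ b, ∀ t, deltaEllK z y k t ≤ (Finset.univ.filter fun n => y n = k).card * t + b := by
  have : Nontrivial (Fin K) := Fin.nontrivial_iff_two_le.mpr hK
  obtain ⟨j, hjk⟩ := exists_ne k
  refine ⟨∑ n, (log (∑ l, exp (z n l)) - z n j), fun t => ?_⟩
  have h n : z n j ≤ log (∑ l, exp (z n l + if l = k then t else 0)) := by
    simpa [hjk] using le_log_sum_exp (fun l => z n l + if l = k then t else 0) j
  have := Finset.sum_le_sum fun n (_ : n ∈ Finset.univ) => h n
  rw [deltaEllK_eq, Finset.sum_sub_distrib, Finset.sum_sub_distrib]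
  linarith

end deltaEllK

theorem one_dim_feasibility {N K : ℕ} (hK : 2 ≤ K)
    (z : Fin N → Fin K → ℝ) (y : Fin N → Fin K) (k : Fin K)
    (hNk : 0 < (Finset.univ.filter (fun n : Fin N => y n = k)).card)
    (hNkN : (Finset.univ.filter (fun n : Fin N => y n = k)).card < N)
    (α : ℝ) (hα0 : 0 < α) (hα1 : α ≤ 1) :
    Filter.Tendsto (deltaEllK z y k) Filter.atTop Filter.atBot ∧
    Filter.Tendsto (deltaEllK z y k) Filter.atBot Filter.atBot ∧
    ∃ a b : ℝ, a ≤ 0 ∧ 0 ≤ b ∧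
      {t : ℝ | Real.log α ≤ deltaEllK z y k t} = Set.Icc a b := by
  have htop : Tendsto (deltaEllK z y k) atTop atBot := by
    obtain ⟨b, hb⟩ := exists_deltaEllK_le_card_sub_mul_add z y k
    exact tendsto_atTop_atBot_of_le_mul_add (by simpa using hNkN) hb
  have hbot : Tendsto (deltaEllK z y k) atBot atBot := by
    obtain ⟨b, hb⟩ := exists_deltaEllK_le_card_mul_add z y k hK
    exact tendsto_atBot_atBot_of_le_mul_add (by exact_mod_cast hNk) hb
  have hzero : Real.log α ≤ deltaEllK z y k 0 := by
    rw [deltaEllK_zero]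
    exact log_nonpos hα0.le hα1
  exact ⟨htop, hbot, (concaveOn_deltaEllK z y k).exists_setOf_le_eq_Icc htop hbot hzero⟩
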